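/- arXiv:2509.23120 — 2 statements merged into one kernel-verified Lean document; each statement's English description precedes it below -/
import Mathlib

section
/- For every p ≥ 1, every β > 0, every finite Λ ⊂ ℤ², every contour γ with Λ_γ ⊆ Λ and every h ∈ ℤ, the p-SOS Gibbs measure with zero boundary condition and no floor satisfies hatπ^{p,0}_Λ(C_{γ,h}) ≤ exp(−β|γ|). -/
open scoped BigOperators Classical

noncomputable section

namespace PSOS

/-- Sites of the square lattice `ℤ²`. -/
abbrev Site : Type := ℤ × ℤ

/-- The nearest-neighbour edges incident to `x`, each written in its normalized
(right/up oriented) form, so that every unordered pair appears in a unique way. -/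
def edgesAt (x : Site) : Finset (Site × Site) :=
  {(x, (x.1 + 1, x.2)), (x, (x.1, x.2 + 1)),
   ((x.1 - 1, x.2), x), ((x.1, x.2 - 1), x)}

/-- Nearest-neighbour edges of `ℤ²` with at least one endpoint in `Λ`,
each unordered pair appearing exactly once. -/
def edges (Λ : Finset Site) : Finset (Site × Site) := Λ.biUnion edgesAt

/-- Extension `ξ` of a configuration `η : Λ → ℤ` by the boundary condition `φ` off `Λ`. -/
def extend (Λ : Finset Site) (φ : Site → ℤ) (η : Λ → ℤ) : Site → ℤ :=
  fun x => if h : x ∈ Λ then η ⟨x, h⟩ else φ x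

/-- The `p`-SOS Hamiltonian `H^{p,φ}_Λ` on `Λ` with boundary condition `φ`. -/
def ham (p : ℝ) (Λ : Finset Site) (φ : Site → ℤ) (η : Λ → ℤ) : ℝ :=
  ∑ e ∈ edges Λ, (|extend Λ φ η e.1 - extend Λ φ η e.2| : ℝ) ^ p

/-- Boltzmann weight `exp(-β H^{p,φ}_Λ(η))`. -/
def weight (p β : ℝ) (Λ : Finset Site) (φ : Site → ℤ) (η : Λ → ℤ) : ℝ :=
  Real.exp (-β * ham p Λ φ η)

/-- Finite-volume Gibbs probability `hatπ^{p,φ}_Λ(A)` of an event `A ⊆ ℤ^Λ`. -/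
def gibbs (p β : ℝ) (Λ : Finset Site) (φ : Site → ℤ) (A : Set (Λ → ℤ)) : ℝ :=
  (∑' η : A, weight p β Λ φ η) / (∑' η : (Λ → ℤ), weight p β Λ φ η)

/-- Gibbs expectation of an observable under `hatπ^{p,φ}_Λ`. -/
def gibbsExp (p β : ℝ) (Λ : Finset Site) (φ : Site → ℤ) (f : (Λ → ℤ) → ℝ) : ℝ :=
  (∑' η : (Λ → ℤ), f η * weight p β Λ φ η) / (∑' η : (Λ → ℤ), weight p β Λ φ η)

/-- The floor event `{η : η_x ≥ 0 for all x ∈ Λ}`. -/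
def floorSet (Λ : Finset Site) : Set (Λ → ℤ) := {η | ∀ x, 0 ≤ η x}

/-- The event `{η : 0 ≤ η_x ≤ n for all x ∈ Λ}` (floor at `0`, ceiling at `n`). -/
def boxSet (Λ : Finset Site) (n : ℕ) : Set (Λ → ℤ) :=
  {η | ∀ x, 0 ≤ η x ∧ η x ≤ (n : ℤ)}

/-- `barπ^{p,0}_Λ`: the Gibbs measure with zero boundary condition conditioned
on the floor event. -/
def barGibbs (p β : ℝ) (Λ : Finset Site) (A : Set (Λ → ℤ)) : ℝ :=
  gibbs p β Λ 0 (A ∩ floorSet Λ) / gibbs p β Λ 0 (floorSet Λ)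

/-- `π^{p,0}_Λ`: the Gibbs measure with zero boundary condition conditioned on
having floor at `0` and ceiling at `n`. -/
def ceilGibbs (p β : ℝ) (Λ : Finset Site) (n : ℕ) (A : Set (Λ → ℤ)) : ℝ :=
  gibbs p β Λ 0 (A ∩ boxSet Λ n) / gibbs p β Λ 0 (boxSet Λ n)

/-- The nearest-neighbour graph on `ℤ²`. -/
def nbrGraph : SimpleGraph Site where
  Adj x y := (x.1 - y.1).natAbs + (x.2 - y.2).natAbs = 1
  symm := ⟨by intro x y hxy; omega⟩
  loopless := ⟨by intro x h; omega⟩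

/-- The four nearest neighbours of a site. -/
def nbrs (x : Site) : Finset Site :=
  {(x.1 + 1, x.2), (x.1 - 1, x.2), (x.1, x.2 + 1), (x.1, x.2 - 1)}

/-- A contour `γ` of the dual lattice `(ℤ²)*`, identified with the finite region
`Λ_γ ⊆ ℤ²` of sites it encloses: the region is nonempty and connected with
connected complement, so that its edge boundary is a single closed dual circuit
(consistently with the standard linking rule at dual vertices). -/
structure Contour where
  interior : Finset Site
  nonempty : interior.Nonempty
  conn : (nbrGraph.induce (interior : Set Site)).Connected
  coconn : (nbrGraph.induce ((interior : Set Site)ᶜ)).Connected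

/-- The nearest-neighbour edges crossing the boundary of `S`, oriented from
inside to outside; these correspond to the bonds of the dual circuit bounding `S`. -/
def bdryEdges (S : Finset Site) : Finset (Site × Site) :=
  S.biUnion fun x => ((nbrs x).filter fun y => y ∉ S).image fun y => (x, y)

/-- `|γ|`: the number of bonds of the contour `γ`. -/
def Contour.len (γ : Contour) : ℕ := (bdryEdges γ.interior).card

/-- `∂⁺_γ`: sites of the interior adjacent to the exterior. -/
def innerBdry (S : Finset Site) : Finset Site :=
  S.filter fun x => ∃ y ∈ nbrs x, y ∉ S

/-- `∂⁻_γ`: sites of the exterior adjacent to the interior. -/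
def outerBdry (S : Finset Site) : Finset Site :=
  (S.biUnion nbrs).filter fun y => y ∉ S

/-- The event `C_{γ,h}` that `γ` is an `h`-contour: the extended configuration `ξ`
is at least `h` on `∂⁺_γ` and at most `h - 1` on `∂⁻_γ`. -/
def contourEvent (Λ : Finset Site) (φ : Site → ℤ) (γ : Contour) (h : ℤ) :
    Set (Λ → ℤ) :=
  {η | (∀ x ∈ innerBdry γ.interior, h ≤ extend Λ φ η x) ∧
       (∀ y ∈ outerBdry γ.interior, extend Λ φ η y ≤ h - 1)}

/-- The map `T_γ` lowering the configuration by `1` inside the contour `γ`. -/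
def lower (Λ : Finset Site) (γ : Contour) (η : Λ → ℤ) : Λ → ℤ :=
  fun x => if (x : Site) ∈ γ.interior then η x - 1 else η x

/-- An event is increasing if it is upward closed for the pointwise order. -/
def IncrEvent (Λ : Finset Site) (E : Set (Λ → ℤ)) : Prop :=
  ∀ η η' : Λ → ℤ, (∀ x, η x ≤ η' x) → η ∈ E → η' ∈ E


/-!
Peierls argument. Lowering the heights by one inside `γ` is an injective map `T`. On `C_{γ,h}`
every bond crossing `γ` carries a height difference `d ≥ 1` (inside minus outside), which `T`
turns into `d - 1`; since `(d - 1)^p + 1 ≤ d^p` for `p ≥ 1`, the energy drops by at least `|γ|`,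
so `weight η ≤ e^{-β|γ|} weight (T η)` on the event. Summing over the event and using
injectivity of `T` bounds its total weight by `e^{-β|γ|}` times the partition function.
-/

lemma tsum_subtype_div_tsum_le {α : Type*} {f : α → ℝ} (hf : 0 ≤ f) {A : Set α} {T : α → α}
    (hT : Set.InjOn T A) {c : ℝ} (hc : 0 ≤ c) (hfT : ∀ a ∈ A, f a ≤ c * f (T a)) :
    (∑' a : A, f a) / (∑' a, f a) ≤ c := by
  -- a vanishing denominator (e.g. a non-summable `f`) makes the quotient `0` by convention
  rcases (tsum_nonneg hf).eq_or_lt with hZ | hZ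
  · rwa [← hZ, div_zero]
  have hs : Summable f := by
    by_contra hs
    exact hZ.ne' (tsum_eq_zero_of_not_summable hs)
  rw [div_le_iff₀ hZ, ← tsum_mul_left]
  exact (hs.subtype A).tsum_le_tsum_of_inj (fun a => T a) hT.injective
    (fun b _ => mul_nonneg hc (hf b)) (fun a => hfT a a.2) (hs.mul_left c)

lemma abs_sub_one_sub_rpow_add_one_le {p : ℝ} (hp : 1 ≤ p) {a b : ℤ} (hab : b < a) :
    |((a - 1 : ℤ) : ℝ) - b| ^ p + 1 ≤ |(a : ℝ) - b| ^ p := by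
  have hd : (1 : ℝ) ≤ a - b := by exact_mod_cast Int.sub_pos.2 hab
  have key := Real.add_rpow_le_rpow_add (by linarith : (0 : ℝ) ≤ a - b - 1) zero_le_one hp
  rw [Real.one_rpow, sub_add_cancel] at key
  push_cast
  rwa [abs_of_nonneg (by linarith), abs_of_nonneg (by linarith), sub_right_comm]

lemma mem_nbrs {x y : Site} : y ∈ nbrs x ↔
    y = (x.1 + 1, x.2) ∨ y = (x.1 - 1, x.2) ∨ y = (x.1, x.2 + 1) ∨ y = (x.1, x.2 - 1) := by
  simp [nbrs]

lemma mem_nbrs_comm {x y : Site} (hy : y ∈ nbrs x) : x ∈ nbrs y := by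
  rw [mem_nbrs] at hy ⊢
  rcases hy with rfl | rfl | rfl | rfl <;> simp

lemma mem_edgesAt {x : Site} {e : Site × Site} : e ∈ edgesAt x ↔
    e = (x, (x.1 + 1, x.2)) ∨ e = (x, (x.1, x.2 + 1)) ∨
    e = ((x.1 - 1, x.2), x) ∨ e = ((x.1, x.2 - 1), x) := by
  simp [edgesAt]

lemma snd_mem_nbrs_of_mem_edges {Λ : Finset Site} {e : Site × Site} (he : e ∈ edges Λ) :
    e.2 ∈ nbrs e.1 := by
  obtain ⟨x, -, hx⟩ := Finset.mem_biUnion.1 he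
  rw [mem_edgesAt] at hx
  rcases hx with rfl | rfl | rfl | rfl <;> simp [mem_nbrs]

lemma mem_bdryEdges {S : Finset Site} {e : Site × Site} :
    e ∈ bdryEdges S ↔ e.1 ∈ S ∧ e.2 ∈ nbrs e.1 ∧ e.2 ∉ S := by
  simp only [bdryEdges, Finset.mem_biUnion, Finset.mem_image, Finset.mem_filter]
  constructor
  · rintro ⟨x, hx, y, ⟨hy, hyS⟩, rfl⟩
    exact ⟨hx, hy, hyS⟩
  · rintro ⟨h1, h2, h3⟩
    exact ⟨e.1, h1, e.2, ⟨h2, h3⟩, rfl⟩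

/-- The bond `{x, y}` in the normalized orientation used by `edgesAt`. -/
def normEdge (x y : Site) : Site × Site :=
  if y = (x.1 + 1, x.2) ∨ y = (x.1, x.2 + 1) then (x, y) else (y, x)

lemma normEdge_eq_or_eq_swap (x y : Site) :
    normEdge x y = (x, y) ∨ normEdge x y = (y, x) := by
  unfold normEdge
  split
  · exact Or.inl rfl
  · exact Or.inr rfl

lemma normEdge_mem_edgesAt {x y : Site} (hy : y ∈ nbrs x) : normEdge x y ∈ edgesAt x := by
  rw [mem_nbrs] at hy
  rw [mem_edgesAt, normEdge]
  rcases hy with rfl | rfl | rfl | rfl <;> simp [Prod.ext_iff] <;> omega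

def Crosses (S : Finset Site) (e : Site × Site) : Prop :=
  (e.1 ∈ S ∧ e.2 ∉ S) ∨ (e.1 ∉ S ∧ e.2 ∈ S)

lemma card_bdryEdges_le_card_crosses {S Λ : Finset Site} (hS : S ⊆ Λ) :
    (bdryEdges S).card ≤ ((edges Λ).filter (Crosses S)).card := by
  apply Finset.card_le_card_of_injOn (fun e => normEdge e.1 e.2)
  · intro e he
    obtain ⟨h1, h2, h3⟩ := mem_bdryEdges.1 he
    refine Finset.mem_filter.2 ⟨Finset.mem_biUnion.2 ⟨e.1, hS h1, normEdge_mem_edgesAt h2⟩, ?_⟩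
    show Crosses S (normEdge e.1 e.2)
    rcases normEdge_eq_or_eq_swap e.1 e.2 with hc | hc <;> rw [hc]
    · exact Or.inl ⟨h1, h3⟩
    · exact Or.inr ⟨h3, h1⟩
  · intro a ha b hb hab
    rw [Finset.mem_coe, mem_bdryEdges] at ha hb
    rcases normEdge_eq_or_eq_swap a.1 a.2 with h1 | h1 <;>
      rcases normEdge_eq_or_eq_swap b.1 b.2 with h2 | h2 <;>
      simp only [h1, h2, Prod.mk.injEq] at hab
    · exact Prod.ext hab.1 hab.2
    · exact absurd (hab.1 ▸ ha.1) hb.2.2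
    · exact absurd (hab.1 ▸ hb.1) ha.2.2
    · exact Prod.ext hab.2 hab.1

lemma extend_lt_extend_of_mem_contourEvent {Λ : Finset Site} {φ : Site → ℤ} {γ : Contour}
    {h : ℤ} {η : Λ → ℤ} (hη : η ∈ contourEvent Λ φ γ h) {x y : Site} (hx : x ∈ γ.interior)
    (hy : y ∈ nbrs x) (hyγ : y ∉ γ.interior) :
    extend Λ φ η y < extend Λ φ η x := by
  have hin := hη.1 x (Finset.mem_filter.2 ⟨hx, y, hy, hyγ⟩)
  have hout := hη.2 y (Finset.mem_filter.2 ⟨Finset.mem_biUnion.2 ⟨x, hx, hy⟩, hyγ⟩)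
  omega

lemma extend_lower {Λ : Finset Site} {γ : Contour} (hγ : γ.interior ⊆ Λ) (η : Λ → ℤ)
    (x : Site) :
    extend Λ 0 (lower Λ γ η) x =
      if x ∈ γ.interior then extend Λ 0 η x - 1 else extend Λ 0 η x := by
  by_cases hx : x ∈ Λ
  · simp only [extend, lower, dif_pos hx]
  · have hxγ : x ∉ γ.interior := fun h => hx (hγ h)
    simp only [extend, dif_neg hx, if_neg hxγ]

lemma lower_injective (Λ : Finset Site) (γ : Contour) : Function.Injective (lower Λ γ) := by
  intro a b hab
  funext x
  have hx := congrFun hab x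
  unfold lower at hx
  split at hx <;> omega

section Energy

variable {p : ℝ} {Λ : Finset Site} {γ : Contour} {h : ℤ} {η : Λ → ℤ}

lemma bond_energy_lower_add_le (hp : 1 ≤ p) (hγ : γ.interior ⊆ Λ)
    (hη : η ∈ contourEvent Λ 0 γ h) {e : Site × Site} (he : e ∈ edges Λ) :
    (|extend Λ 0 (lower Λ γ η) e.1 - extend Λ 0 (lower Λ γ η) e.2| : ℝ) ^ p
        + (if Crosses γ.interior e then 1 else 0)
      ≤ (|extend Λ 0 η e.1 - extend Λ 0 η e.2| : ℝ) ^ p := by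
  have hnbr := snd_mem_nbrs_of_mem_edges he
  rw [extend_lower hγ, extend_lower hγ]
  by_cases h1 : e.1 ∈ γ.interior <;> by_cases h2 : e.2 ∈ γ.interior <;>
    simp only [h1, h2, Crosses, if_true, if_false, true_and, and_true, not_true, not_false_eq_true,
      or_false, add_zero]
  · push_cast
    rw [sub_sub_sub_cancel_right]
  · exact abs_sub_one_sub_rpow_add_one_le hp
      (extend_lt_extend_of_mem_contourEvent hη h1 hnbr h2)
  · rw [abs_sub_comm, abs_sub_comm (extend Λ 0 η e.1 : ℝ)]
    exact abs_sub_one_sub_rpow_add_one_le hp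
      (extend_lt_extend_of_mem_contourEvent hη h2 (mem_nbrs_comm hnbr) h1)
  · exact le_rfl

lemma ham_lower_add_len_le (hp : 1 ≤ p) (hγ : γ.interior ⊆ Λ)
    (hη : η ∈ contourEvent Λ 0 γ h) :
    ham p Λ 0 (lower Λ γ η) + γ.len ≤ ham p Λ 0 η := by
  have hlen : (γ.len : ℝ) ≤ ∑ e ∈ edges Λ, if Crosses γ.interior e then (1 : ℝ) else 0 := by
    rw [Finset.sum_boole]
    exact_mod_cast card_bdryEdges_le_card_crosses hγ
  calc ham p Λ 0 (lower Λ γ η) + γ.len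
      ≤ ham p Λ 0 (lower Λ γ η) + ∑ e ∈ edges Λ, if Crosses γ.interior e then (1 : ℝ) else 0 := by
        gcongr
    _ ≤ ham p Λ 0 η := by
        rw [ham, ← Finset.sum_add_distrib]
        exact Finset.sum_le_sum fun e he => bond_energy_lower_add_le hp hγ hη he

lemma weight_le_exp_mul_weight_lower {β : ℝ} (hβ : 0 ≤ β) (hp : 1 ≤ p) (hγ : γ.interior ⊆ Λ)
    (hη : η ∈ contourEvent Λ 0 γ h) :
    weight p β Λ 0 η ≤ Real.exp (-β * γ.len) * weight p β Λ 0 (lower Λ γ η) := by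
  rw [weight, weight, ← Real.exp_add, Real.exp_le_exp]
  linarith [mul_le_mul_of_nonneg_left (ham_lower_add_len_le hp hγ hη) hβ]

end Energy

/-- Peierls bound, no floor: for every `p ≥ 1`, `β > 0`, every
finite `Λ ⊆ ℤ²`, every contour `γ` with `Λ_γ ⊆ Λ` and every `h ∈ ℤ`, the `p`-SOS
Gibbs measure with zero boundary condition and no floor satisfies
`hatπ^{p,0}_Λ(C_{γ,h}) ≤ exp(-β|γ|)`. -/
theorem statement_1 (p β : ℝ) (hp : 1 ≤ p) (hβ : 0 < β)
    (Λ : Finset Site) (γ : Contour) (hγ : γ.interior ⊆ Λ) (h : ℤ) :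
    gibbs p β Λ 0 (contourEvent Λ 0 γ h) ≤ Real.exp (-β * (γ.len : ℝ)) :=
  tsum_subtype_div_tsum_le (f := weight p β Λ 0) (A := contourEvent Λ 0 γ h)
    (fun _ => (Real.exp_pos _).le) (lower_injective Λ γ).injOn (Real.exp_pos _).le
    fun _ hη => weight_le_exp_mul_weight_lower hβ.le hp hγ hη

end PSOS
end
end

section
/- Let (X_t)_{t≥0} be a discrete-time Markov chain on a finite state space Ω with transition matrix P reversible with respect to a probability measure π with π(η) > 0 for all η ∈ Ω. Let A ⊆ Ω with π(A) > 0, let ∂A = {η ∈ A : P(η,η′) > 0 for some η′ ∉ A} be the internal boundary of A, and let ν = π(· | A). Then for every B ⊆ Ω and every T ∈ ℕ, the chain started from ν satisfies P_ν(τ_B ≤ T) ≤ (T+1) (ν(∂A) + ν(B)), where τ_B = min{t ≥ 0 : X_t ∈ B} is the hitting time of B. -/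
open scoped BigOperators Classical

noncomputable section

namespace MarkovHitting

variable {Ω : Type*} [Fintype Ω]

/-- The mass a (sub)probability vector `ν` gives to a set `S`. -/
def meas (ν : Ω → ℝ) (S : Set Ω) : ℝ := ∑ x, if x ∈ S then ν x else 0

/-- The conditioned distribution `π(· | A)`. -/
def condDist (π : Ω → ℝ) (A : Set Ω) : Ω → ℝ :=
  fun x => if x ∈ A then π x / meas π A else 0

/-- The internal boundary `∂A = {x ∈ A : P(x,y) > 0 for some y ∉ A}`. -/
def intBdry (P : Ω → Ω → ℝ) (A : Set Ω) : Set Ω :=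
  {x ∈ A | ∃ y, y ∉ A ∧ 0 < P x y}

/-- `P_ν(τ_B ≤ T)`: the probability that the chain with transition matrix `P` and
initial law `ν` visits `B` at some time `t` with `0 ≤ t ≤ T`, written as a sum
over trajectories `ω : Fin (T+1) → Ω`. -/
def hitProb (ν : Ω → ℝ) (P : Ω → Ω → ℝ) (B : Set Ω) (T : ℕ) : ℝ :=
  ∑ ω : Fin (T + 1) → Ω,
    if ∃ t, ω t ∈ B then
      ν (ω 0) * ∏ i : Fin T, P (ω i.castSucc) (ω i.succ)
    else 0

/-! A trajectory started in `A` that hits `B` by time `T` either meets `B ∩ A` before leaving `A`,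
or leaves `A`, which it can only do from a state of `∂A` (the step out has positive probability).
So it visits `∂A ∪ (B ∩ A) ⊆ A` at some time `t ≤ T`, and a union bound over `t` leaves
`P_ν(X_t ∈ S) ≤ ν(S)` for `S ⊆ A`. This holds because `ν = π(· | A) ≤ π / π(A)` pointwise and
`π` is stationary (by reversibility), so the law of every `X_t` stays below `π / π(A)`. -/

def pathWeight (ν : Ω → ℝ) (P : Ω → Ω → ℝ) {T : ℕ} (ω : Fin (T + 1) → Ω) : ℝ :=
  ν (ω 0) * ∏ i : Fin T, P (ω i.castSucc) (ω i.succ)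

section Paths

variable {P : Ω → Ω → ℝ} {T : ℕ}

lemma sum_fin_succ_pi {M : Type*} [AddCommMonoid M] (f : (Fin (T + 2) → Ω) → M) :
    ∑ ω, f ω = ∑ x, ∑ ω : Fin (T + 1) → Ω, f (Fin.cons x ω) := by
  rw [← (Fin.consEquiv fun _ => Ω).sum_comp, Fintype.sum_prod_type]
  rfl

lemma sum_pathWeight_cons (ν : Ω → ℝ) (ω : Fin (T + 1) → Ω) :
    ∑ x, pathWeight ν P (Fin.cons x ω : Fin (T + 2) → Ω) =
      pathWeight (fun y => ∑ x, ν x * P x y) P ω := by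
  simp only [pathWeight, Fin.prod_univ_succ, Finset.sum_mul, mul_assoc]
  rfl

lemma sum_pathWeight_fin_succ (ν : Ω → ℝ) (g : (Fin (T + 1) → Ω) → ℝ) :
    ∑ ω : Fin (T + 2) → Ω, g (Fin.tail ω) * pathWeight ν P ω =
      ∑ ω, g ω * pathWeight (fun y => ∑ x, ν x * P x y) P ω := by
  rw [sum_fin_succ_pi, Finset.sum_comm]
  simp only [Fin.tail_cons, ← Finset.mul_sum, sum_pathWeight_cons]

lemma sum_pathWeight (hProw : ∀ x, ∑ y, P x y = 1) (ν : Ω → ℝ) :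
    ∑ ω : Fin (T + 1) → Ω, pathWeight ν P ω = ∑ x, ν x := by
  induction T generalizing ν with
  | zero => exact Fintype.sum_equiv (Equiv.funUnique (Fin 1) Ω) _ _ fun ω => by simp [pathWeight]
  | succ T ih =>
    have step := sum_pathWeight_fin_succ (P := P) (T := T) ν fun _ => 1
    simp only [one_mul] at step
    rw [step, ih, Finset.sum_comm]
    simp only [← Finset.mul_sum, hProw, mul_one]

lemma sum_mul_pathWeight_zero (hProw : ∀ x, ∑ y, P x y = 1) (g ν : Ω → ℝ) :
    ∑ ω : Fin (T + 1) → Ω, g (ω 0) * pathWeight ν P ω = ∑ x, g x * ν x := by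
  simp only [pathWeight, ← mul_assoc]
  exact sum_pathWeight hProw fun x => g x * ν x

end Paths

section Bound

variable {P : Ω → Ω → ℝ} {π ν g : Ω → ℝ} {c : ℝ}

lemma sum_mul_le_of_le_mul (hPnn : ∀ x y, 0 ≤ P x y) (hπ : ∀ y, ∑ x, π x * P x y = π y)
    (hν : ∀ x, ν x ≤ c * π x) (y : Ω) : ∑ x, ν x * P x y ≤ c * π y :=
  calc ∑ x, ν x * P x y ≤ ∑ x, c * π x * P x y := by gcongr with x; exacts [hPnn x y, hν x]
    _ = c * π y := by simp only [mul_assoc, ← Finset.mul_sum, hπ]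

lemma sum_mul_pathWeight_le (hPnn : ∀ x y, 0 ≤ P x y) (hProw : ∀ x, ∑ y, P x y = 1)
    (hπ : ∀ y, ∑ x, π x * P x y = π y) (hg : ∀ x, 0 ≤ g x) (hν : ∀ x, ν x ≤ c * π x)
    {T : ℕ} (t : Fin (T + 1)) :
    ∑ ω : Fin (T + 1) → Ω, g (ω t) * pathWeight ν P ω ≤ c * ∑ x, g x * π x := by
  have initial : ∀ {T : ℕ} {ν : Ω → ℝ}, (∀ x, ν x ≤ c * π x) →
      ∑ ω : Fin (T + 1) → Ω, g (ω 0) * pathWeight ν P ω ≤ c * ∑ x, g x * π x := by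
    intro T ν hν
    rw [sum_mul_pathWeight_zero hProw, Finset.mul_sum]
    exact Finset.sum_le_sum fun x _ =>
      (mul_le_mul_of_nonneg_left (hν x) (hg x)).trans_eq (mul_left_comm _ _ _)
  induction T generalizing ν with
  | zero => exact Fin.fin_one_eq_zero t ▸ initial hν
  | succ T ih =>
    cases t using Fin.cases with
    | zero => exact initial hν
    | succ j =>
      exact (sum_pathWeight_fin_succ ν fun ω => g (ω j)).trans_le
        (ih (sum_mul_le_of_le_mul hPnn hπ hν) j)

end Bound

section Trajectories

variable {α : Type*} {P : α → α → ℝ} {A : Set α} {T : ℕ} {ω : Fin (T + 1) → α}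

lemma mem_or_exists_mem_intBdry (h0 : ω 0 ∈ A)
    (hpos : ∀ i : Fin T, 0 < P (ω i.castSucc) (ω i.succ)) (s : Fin (T + 1)) :
    ω s ∈ A ∨ ∃ t, ω t ∈ intBdry P A := by
  induction s using Fin.induction with
  | zero => exact Or.inl h0
  | succ i ih =>
    by_cases hi : ω i.succ ∈ A
    · exact Or.inl hi
    · exact Or.inr (ih.elim (fun hiA => ⟨i.castSucc, hiA, ω i.succ, hi, hpos i⟩) id)

lemma exists_mem_intBdry_union_of_pathWeight_ne_zero {ν : α → ℝ} {B : Set α}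
    (hPnn : ∀ x y, 0 ≤ P x y) (hνA : ∀ x, ν x ≠ 0 → x ∈ A) (hω : pathWeight ν P ω ≠ 0)
    (hB : ∃ t, ω t ∈ B) : ∃ t, ω t ∈ intBdry P A ∪ B ∩ A := by
  obtain ⟨hν, hprod⟩ := mul_ne_zero_iff.mp hω
  have hpos : ∀ i : Fin T, 0 < P (ω i.castSucc) (ω i.succ) := fun i =>
    (hPnn _ _).lt_of_ne' (Finset.prod_ne_zero_iff.mp hprod i (Finset.mem_univ i))
  obtain ⟨t, htB⟩ := hB
  rcases mem_or_exists_mem_intBdry (hνA _ hν) hpos t with htA | ⟨s, hs⟩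
  · exact ⟨t, Or.inr ⟨htB, htA⟩⟩
  · exact ⟨s, Or.inl hs⟩

lemma ite_exists_mem_le_sum_mul_pathWeight {ν g : α → ℝ} {B : Set α}
    (hPnn : ∀ x y, 0 ≤ P x y) (hν0 : ∀ x, 0 ≤ ν x) (hνA : ∀ x, ν x ≠ 0 → x ∈ A)
    (hg0 : ∀ x, 0 ≤ g x) (hg1 : ∀ x ∈ intBdry P A ∪ B ∩ A, 1 ≤ g x) (ω : Fin (T + 1) → α) :
    (if ∃ t, ω t ∈ B then pathWeight ν P ω else 0) ≤ ∑ t, g (ω t) * pathWeight ν P ω := by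
  have hw : 0 ≤ pathWeight ν P ω :=
    mul_nonneg (hν0 _) (Finset.prod_nonneg fun i _ => hPnn _ _)
  have hsum : 0 ≤ ∑ t, g (ω t) * pathWeight ν P ω :=
    Finset.sum_nonneg fun t _ => mul_nonneg (hg0 _) hw
  split_ifs with hB
  · rcases hw.eq_or_lt with hw0 | hwpos
    · exact hw0 ▸ hsum
    · obtain ⟨t, ht⟩ :=
        exists_mem_intBdry_union_of_pathWeight_ne_zero hPnn hνA hwpos.ne' hB
      calc pathWeight ν P ω ≤ g (ω t) * pathWeight ν P ω := le_mul_of_one_le_left hw (hg1 _ ht)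
        _ ≤ ∑ t, g (ω t) * pathWeight ν P ω :=
          Finset.single_le_sum (fun s _ => mul_nonneg (hg0 _) hw) (Finset.mem_univ t)
  · exact hsum

end Trajectories

section Conditioning

variable {π ν : Ω → ℝ} {A S : Set Ω}

lemma sum_mul_eq_of_reversible {P : Ω → Ω → ℝ} (hProw : ∀ x, ∑ y, P x y = 1)
    (hrev : ∀ x y, π x * P x y = π y * P y x) (y : Ω) : ∑ x, π x * P x y = π y := by
  simp only [hrev _ y, ← Finset.mul_sum, hProw, mul_one]

lemma meas_eq_sum_indicator (ν : Ω → ℝ) (S : Set Ω) : meas ν S = ∑ x, S.indicator ν x := by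
  simp only [meas, Set.indicator_apply]

lemma sum_indicator_one_mul (S : Set Ω) (ν : Ω → ℝ) :
    ∑ x, S.indicator 1 x * ν x = meas ν S := by
  simp only [meas, Set.indicator_apply, Pi.one_apply, ite_mul, one_mul, zero_mul]

lemma meas_mono (hν : ∀ x, 0 ≤ ν x) {S S' : Set Ω} (h : S ⊆ S') : meas ν S ≤ meas ν S' := by
  simp only [meas_eq_sum_indicator]
  exact Finset.sum_le_sum fun x _ => Set.indicator_le_indicator_of_subset h hν x

lemma meas_union_le (hν : ∀ x, 0 ≤ ν x) (S S' : Set Ω) :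
    meas ν (S ∪ S') ≤ meas ν S + meas ν S' := by
  simp only [meas_eq_sum_indicator, ← Finset.sum_add_distrib]
  exact Finset.sum_le_sum fun x _ =>
    (le_add_of_nonneg_right (Set.indicator_nonneg (fun y _ => hν y) x)).trans_eq
      (Set.indicator_union_add_inter_apply ν S S' x)

lemma condDist_nonneg (hπ : ∀ x, 0 ≤ π x) (hA : 0 ≤ meas π A) (x : Ω) : 0 ≤ condDist π A x := by
  unfold condDist; split_ifs
  exacts [div_nonneg (hπ x) hA, le_rfl]

lemma mem_of_condDist_ne_zero {x : Ω} (hx : condDist π A x ≠ 0) : x ∈ A := by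
  by_contra h
  exact hx (if_neg h)

lemma condDist_le_inv_mul (hπ : ∀ x, 0 ≤ π x) (hA : 0 ≤ meas π A) (x : Ω) :
    condDist π A x ≤ (meas π A)⁻¹ * π x := by
  unfold condDist; split_ifs
  exacts [(div_eq_inv_mul _ _).le, mul_nonneg (inv_nonneg.mpr hA) (hπ x)]

lemma meas_condDist_of_subset (hS : S ⊆ A) : meas (condDist π A) S = (meas π A)⁻¹ * meas π S := by
  rw [meas.eq_1 _ S, meas.eq_1 π S, Finset.mul_sum]
  refine Finset.sum_congr rfl fun x _ => ?_
  by_cases hx : x ∈ S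
  · simp [condDist, hx, hS hx, div_eq_inv_mul]
  · simp [hx]

end Conditioning

theorem statement_18_general
    (P : Ω → Ω → ℝ) (π : Ω → ℝ)
    (hPnn : ∀ x y, 0 ≤ P x y) (hProw : ∀ x, ∑ y, P x y = 1)
    (hπpos : ∀ x, 0 < π x)
    (hrev : ∀ x y, π x * P x y = π y * P y x)
    (A B : Set Ω) (hA : 0 < meas π A) (T : ℕ) :
    hitProb (condDist π A) P B T ≤
      ((T : ℝ) + 1) *
        (meas (condDist π A) (intBdry P A) + meas (condDist π A) B) := by
  set ν := condDist π A
  set S := intBdry P A ∪ B ∩ A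
  have hπ : ∀ x, 0 ≤ π x := fun x => (hπpos x).le
  have hν : ∀ x, 0 ≤ ν x := condDist_nonneg hπ hA.le
  have hg0 : ∀ x, 0 ≤ S.indicator (1 : Ω → ℝ) x := Set.indicator_nonneg fun _ _ => zero_le_one
  have hg1 : ∀ x ∈ S, 1 ≤ S.indicator (1 : Ω → ℝ) x := fun x hx => (Set.indicator_of_mem hx 1).ge
  calc hitProb ν P B T
      ≤ ∑ t : Fin (T + 1), ∑ ω : Fin (T + 1) → Ω, S.indicator 1 (ω t) * pathWeight ν P ω := by
        rw [Finset.sum_comm]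
        exact Finset.sum_le_sum fun ω _ => ite_exists_mem_le_sum_mul_pathWeight hPnn hν
          (fun _ => mem_of_condDist_ne_zero) hg0 hg1 ω
    _ ≤ ∑ _t : Fin (T + 1), (meas π A)⁻¹ * ∑ x, S.indicator 1 x * π x :=
        Finset.sum_le_sum fun t _ => sum_mul_pathWeight_le hPnn hProw
          (sum_mul_eq_of_reversible hProw hrev) hg0 (condDist_le_inv_mul hπ hA.le) t
    _ = ((T : ℝ) + 1) * meas ν S := by
        rw [sum_indicator_one_mul, meas_condDist_of_subset (Set.union_subset (fun _ hx => hx.1)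
          Set.inter_subset_right), Finset.sum_const, Finset.card_univ, Fintype.card_fin,
          nsmul_eq_mul, Nat.cast_succ]
    _ ≤ ((T : ℝ) + 1) * (meas ν (intBdry P A) + meas ν B) := by
        gcongr
        exact (meas_union_le hν _ _).trans
          (add_le_add_right (meas_mono hν Set.inter_subset_left) _)

/-- let `P` be a stochastic matrix on a finite state space `Ω`,
reversible with respect to an everywhere-positive probability measure `π`. Let
`A ⊆ Ω` with `π(A) > 0`, let `∂A` be its internal boundary and `ν = π(· | A)`.
Then for every `B ⊆ Ω` and `T ∈ ℕ`, the chain started from `ν` satisfies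
`P_ν(τ_B ≤ T) ≤ (T+1)(ν(∂A) + ν(B))`, where `τ_B` is the hitting time of `B`. -/
theorem statement_18
    (P : Ω → Ω → ℝ) (π : Ω → ℝ)
    (hPnn : ∀ x y, 0 ≤ P x y) (hProw : ∀ x, ∑ y, P x y = 1)
    (hπpos : ∀ x, 0 < π x) (hπsum : ∑ x, π x = 1)
    (hrev : ∀ x y, π x * P x y = π y * P y x)
    (A B : Set Ω) (hA : 0 < meas π A) (T : ℕ) :
    hitProb (condDist π A) P B T ≤
      ((T : ℝ) + 1) *
        (meas (condDist π A) (intBdry P A) + meas (condDist π A) B) :=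
  statement_18_general P π hPnn hProw hπpos hrev A B hA T

end MarkovHitting
end
end
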